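/- arXiv:2508.09609 — 2 statements merged into one kernel-verified Lean document; each statement's English description precedes it below -/
import Mathlib

section
/- Let f be a smooth compactly supported function on the upper half-space ℝ³₊ = {x ∈ ℝ³ : x₃ > 0}. Then the L^∞ norm of f is bounded, up to a universal constant, by the product ‖f‖_{L²}^{1/8} ‖∂₁f‖_{L²}^{1/8} ‖∂₂f‖_{L²}^{1/8} ‖∂₁∂₂f‖_{L²}^{1/8} ‖∂₃f‖_{L²}^{1/8} ‖∂₁∂₃f‖_{L²}^{1/8} ‖∂₂∂₃f‖_{L²}^{1/8} ‖∂₁∂₂∂₃f‖_{L²}^{1/8}. -/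
open MeasureTheory

def H3 : Set (Fin 3 → ℝ) := {x | 0 < x 2}

noncomputable def pd (i : Fin 3) (f : (Fin 3 → ℝ) → ℝ) : (Fin 3 → ℝ) → ℝ :=
  fun x => fderiv ℝ f x (Pi.single i 1)

noncomputable def L2 (f : (Fin 3 → ℝ) → ℝ) : ℝ :=
  Real.sqrt (∫ x in H3, (f x) ^ 2)

open Set Filter





namespace AgmonAux

/-- Cauchy–Schwarz for integrals. -/
lemma cs {α : Type*} [MeasurableSpace α] (ν : Measure α) {u v : α → ℝ}
    (hu : MemLp u 2 ν) (hv : MemLp v 2 ν) :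
    ∫ a, |u a * v a| ∂ν ≤ Real.sqrt (∫ a, u a ^ 2 ∂ν) * Real.sqrt (∫ a, v a ^ 2 ∂ν) := by
  have h2 : (2:ℝ).HolderConjugate 2 := ⟨by norm_num, by norm_num, by norm_num⟩
  have hu' : MemLp (fun a => |u a|) (ENNReal.ofReal 2) ν := by
    simpa [Real.norm_eq_abs, ENNReal.ofReal_ofNat] using hu.norm
  have hv' : MemLp (fun a => |v a|) (ENNReal.ofReal 2) ν := by
    simpa [Real.norm_eq_abs, ENNReal.ofReal_ofNat] using hv.norm
  have := integral_mul_le_Lp_mul_Lq_of_nonneg h2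
    (Eventually.of_forall fun a => abs_nonneg (u a))
    (Eventually.of_forall fun a => abs_nonneg (v a)) hu' hv'
  have e1 : ∀ a, |u a| * |v a| = |u a * v a| := fun a => (abs_mul _ _).symm
  have e2 : ∀ a, |u a| ^ (2:ℝ) = u a ^ 2 := by
    intro a
    rw [show ((2:ℝ)) = ((2:ℕ):ℝ) by norm_num, Real.rpow_natCast, sq_abs]
  have e3 : ∀ a, |v a| ^ (2:ℝ) = v a ^ 2 := by
    intro a
    rw [show ((2:ℝ)) = ((2:ℕ):ℝ) by norm_num, Real.rpow_natCast, sq_abs]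
  simp only [e1, e2, e3] at this
  calc ∫ a, |u a * v a| ∂ν ≤ (∫ a, u a ^ 2 ∂ν) ^ ((1:ℝ)/2) * (∫ a, v a ^ 2 ∂ν) ^ ((1:ℝ)/2) := this
    _ = Real.sqrt (∫ a, u a ^ 2 ∂ν) * Real.sqrt (∫ a, v a ^ 2 ∂ν) := by
        rw [Real.sqrt_eq_rpow, Real.sqrt_eq_rpow]

/-- 1D Agmon bound. -/
lemma oneD {g : ℝ → ℝ} (hg : ContDiff ℝ 1 g) (hs : HasCompactSupport g) (t : ℝ) :
    g t ^ 2 ≤ 2 * ∫ s in Ioi t, |g s * deriv g s| := by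
  have hsq : ContDiff ℝ 1 (fun x => g x ^ 2) := hg.pow 2
  have hsqs : HasCompactSupport fun x => g x ^ 2 := by
    apply hs.mono
    intro x hx
    simp only [Function.mem_support, ne_eq] at hx ⊢
    intro h0; exact hx (by rw [h0]; ring)
  have key := HasCompactSupport.integral_Ioi_deriv_eq hsq hsqs t
  have hderiv : ∀ x, deriv (fun y => g y ^ 2) x = 2 * (g x * deriv g x) := by
    intro x
    have h1 : HasDerivAt g (deriv g x) x := (hg.differentiable one_ne_zero x).hasDerivAt
    have h2 := h1.fun_pow 2
    simpa [pow_one, mul_assoc] using h2.deriv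
  have e2 : g t ^ 2 = |∫ x in Ioi t, deriv (fun y => g y ^ 2) x| := by
    rw [key, abs_neg, abs_of_nonneg (by positivity)]
  have habs : |∫ x in Ioi t, deriv (fun y => g y ^ 2) x|
      ≤ ∫ x in Ioi t, |deriv (fun y => g y ^ 2) x| := by
    simpa [Real.norm_eq_abs] using
      norm_integral_le_integral_norm (μ := volume.restrict (Ioi t))
        (fun x => deriv (fun y => g y ^ 2) x)
  calc g t ^ 2 = |∫ x in Ioi t, deriv (fun y => g y ^ 2) x| := e2
    _ ≤ ∫ x in Ioi t, |deriv (fun y => g y ^ 2) x| := habs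
    _ = ∫ x in Ioi t, 2 * |g x * deriv g x| := by
        apply integral_congr_ae
        filter_upwards with x
        rw [hderiv x, abs_mul, abs_two]
    _ = 2 * ∫ x in Ioi t, |g x * deriv g x| := integral_const_mul 2 _

lemma integrable_gg' {g : ℝ → ℝ} (hg : ContDiff ℝ 1 g) (hs : HasCompactSupport g) :
    Integrable (fun s => |g s * deriv g s|) := by
  have hc : Continuous fun s => |g s * deriv g s| :=
    (hg.continuous.mul (hg.continuous_deriv le_rfl)).abs
  have hcs : HasCompactSupport fun s => |g s * deriv g s| := by
    apply hs.mono
    intro x hx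
    simp only [Function.mem_support, ne_eq] at hx ⊢
    intro h0; exact hx (by rw [h0]; simp)
  exact hc.integrable_of_hasCompactSupport hcs

lemma oneD_all {g : ℝ → ℝ} (hg : ContDiff ℝ 1 g) (hs : HasCompactSupport g) (t : ℝ) :
    g t ^ 2 ≤ 2 * ∫ s, |g s * deriv g s| := by
  refine (oneD hg hs t).trans ?_
  have h := integrable_gg' hg hs
  refine mul_le_mul_of_nonneg_left ?_ (by norm_num)
  exact setIntegral_le_integral h (Eventually.of_forall fun s => abs_nonneg _)

lemma oneD_pos {g : ℝ → ℝ} (hg : ContDiff ℝ 1 g) (hs : HasCompactSupport g) {t : ℝ}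
    (ht : 0 < t) :
    g t ^ 2 ≤ 2 * ∫ s in Ioi (0:ℝ), |g s * deriv g s| := by
  refine (oneD hg hs t).trans ?_
  have h := integrable_gg' hg hs
  refine mul_le_mul_of_nonneg_left ?_ (by norm_num)
  exact setIntegral_mono_set h.integrableOn
    (Eventually.of_forall fun s => abs_nonneg _)
    (HasSubset.Subset.eventuallyLE (Ioi_subset_Ioi ht.le))

/-- Compact support of slices via a retraction. -/
lemma retract {X Y : Type*} [TopologicalSpace X] [TopologicalSpace Y] [T2Space Y]
    {G : X → ℝ} (hs : HasCompactSupport G) (A : Y → X) {π : X → Y}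
    (hπ : Continuous π) (hid : ∀ y, π (A y) = y) : HasCompactSupport (G ∘ A) := by
  apply HasCompactSupport.intro (hs.image hπ)
  intro y hy
  by_contra h0
  exact hy ⟨A y, subset_tsupport G h0, hid y⟩

end AgmonAux

namespace AgmonAux

noncomputable def μ0 : Measure ℝ := volume.restrict (Ioi 0)
noncomputable def π₂ : Measure (ℝ × ℝ) := μ0.prod volume
noncomputable def π₃ : Measure ((ℝ × ℝ) × ℝ) := π₂.prod volume

instance : SigmaFinite μ0 := by unfold μ0; infer_instance
instance : SigmaFinite π₂ := by unfold π₂; infer_instance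
instance : SigmaFinite π₃ := by unfold π₃; infer_instance

lemma pi2_eq : π₂ = (volume : Measure (ℝ × ℝ)).restrict (Ioi 0 ×ˢ univ) := by
  calc π₂ = ((volume : Measure ℝ).restrict (Ioi 0)).prod ((volume : Measure ℝ).restrict univ) := by
        rw [π₂, μ0, Measure.restrict_univ]
    _ = ((volume : Measure ℝ).prod volume).restrict (Ioi 0 ×ˢ univ) := Measure.prod_restrict _ _
    _ = (volume : Measure (ℝ × ℝ)).restrict (Ioi 0 ×ˢ univ) := by rw [← Measure.volume_eq_prod]

lemma pi3_eq :
    π₃ = (volume : Measure ((ℝ × ℝ) × ℝ)).restrict ((Ioi 0 ×ˢ univ) ×ˢ univ) := by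
  calc π₃ = ((volume : Measure (ℝ × ℝ)).restrict (Ioi 0 ×ˢ univ)).prod
        ((volume : Measure ℝ).restrict univ) := by rw [π₃, pi2_eq, Measure.restrict_univ]
    _ = ((volume : Measure (ℝ × ℝ)).prod volume).restrict ((Ioi 0 ×ˢ univ) ×ˢ univ) :=
        Measure.prod_restrict _ _
    _ = (volume : Measure ((ℝ × ℝ) × ℝ)).restrict ((Ioi 0 ×ˢ univ) ×ˢ univ) := by
        rw [← Measure.volume_eq_prod]

lemma mu0_le : μ0 ≤ (volume : Measure ℝ) := Measure.restrict_le_self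
lemma pi2_le : π₂ ≤ (volume : Measure (ℝ × ℝ)) := by
  rw [pi2_eq]; exact Measure.restrict_le_self
lemma pi3_le : π₃ ≤ (volume : Measure ((ℝ × ℝ) × ℝ)) := by
  rw [pi3_eq]; exact Measure.restrict_le_self

variable {G : (ℝ × ℝ) × ℝ → ℝ}

noncomputable def Dt (G : (ℝ × ℝ) × ℝ → ℝ) : (ℝ × ℝ) × ℝ → ℝ :=
  fun q => fderiv ℝ G q ((1, 0), 0)
noncomputable def Dy (G : (ℝ × ℝ) × ℝ → ℝ) : (ℝ × ℝ) × ℝ → ℝ :=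
  fun q => fderiv ℝ G q ((0, 1), 0)
noncomputable def Dx (G : (ℝ × ℝ) × ℝ → ℝ) : (ℝ × ℝ) × ℝ → ℝ :=
  fun q => fderiv ℝ G q ((0, 0), 1)

lemma contDiff_D (hG : ContDiff ℝ (⊤ : ℕ∞) G) (v : (ℝ × ℝ) × ℝ) :
    ContDiff ℝ (⊤ : ℕ∞) fun q => fderiv ℝ G q v :=
  (hG.fderiv_right (by simp)).clm_apply contDiff_const

lemma hcs_D (hs : HasCompactSupport G) (v : (ℝ × ℝ) × ℝ) :
    HasCompactSupport fun q => fderiv ℝ G q v :=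
  HasCompactSupport.fderiv_apply ℝ hs v

lemma contDiff_Dt (hG : ContDiff ℝ (⊤ : ℕ∞) G) : ContDiff ℝ (⊤ : ℕ∞) (Dt G) := contDiff_D hG _
lemma contDiff_Dy (hG : ContDiff ℝ (⊤ : ℕ∞) G) : ContDiff ℝ (⊤ : ℕ∞) (Dy G) := contDiff_D hG _
lemma contDiff_Dx (hG : ContDiff ℝ (⊤ : ℕ∞) G) : ContDiff ℝ (⊤ : ℕ∞) (Dx G) := contDiff_D hG _
lemma hcs_Dt (hs : HasCompactSupport G) : HasCompactSupport (Dt G) := hcs_D hs _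
lemma hcs_Dy (hs : HasCompactSupport G) : HasCompactSupport (Dy G) := hcs_D hs _
lemma hcs_Dx (hs : HasCompactSupport G) : HasCompactSupport (Dx G) := hcs_D hs _

lemma slice_t (hG : Differentiable ℝ G) (y x s : ℝ) :
    HasDerivAt (fun t => G ((t, y), x)) (Dt G ((s, y), x)) s := by
  have hA : HasDerivAt (fun t : ℝ => ((t, y), x)) (((1:ℝ), (0:ℝ)), (0:ℝ)) s :=
    ((hasDerivAt_id s).prodMk (hasDerivAt_const _ _)).prodMk (hasDerivAt_const _ _)
  exact (hG ((s, y), x)).hasFDerivAt.comp_hasDerivAt s hA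

lemma slice_y (hG : Differentiable ℝ G) (t x s : ℝ) :
    HasDerivAt (fun y => G ((t, y), x)) (Dy G ((t, s), x)) s := by
  have hA : HasDerivAt (fun y : ℝ => ((t, y), x)) (((0:ℝ), (1:ℝ)), (0:ℝ)) s :=
    ((hasDerivAt_const _ _).prodMk (hasDerivAt_id s)).prodMk (hasDerivAt_const _ _)
  exact (hG ((t, s), x)).hasFDerivAt.comp_hasDerivAt s hA

lemma slice_x (hG : Differentiable ℝ G) (t y s : ℝ) :
    HasDerivAt (fun x => G ((t, y), x)) (Dx G ((t, y), s)) s := by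
  have hA : HasDerivAt (fun x : ℝ => ((t, y), x)) (((0:ℝ), (0:ℝ)), (1:ℝ)) s :=
    ((hasDerivAt_const _ _).prodMk (hasDerivAt_const _ _)).prodMk (hasDerivAt_id s)
  exact (hG ((t, y), s)).hasFDerivAt.comp_hasDerivAt s hA

end AgmonAux

namespace AgmonAux

variable {G : (ℝ × ℝ) × ℝ → ℝ}

lemma memLp_mu0 {g : ℝ → ℝ} (hc : Continuous g) (hcs : HasCompactSupport g) :
    MemLp g 2 μ0 :=
  (hc.memLp_of_hasCompactSupport hcs).mono_measure mu0_le

lemma memLp_pi2 {g : ℝ × ℝ → ℝ} (hc : Continuous g) (hcs : HasCompactSupport g) :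
    MemLp g 2 π₂ :=
  (hc.memLp_of_hasCompactSupport hcs).mono_measure pi2_le

lemma memLp_pi3 {g : (ℝ × ℝ) × ℝ → ℝ} (hc : Continuous g) (hcs : HasCompactSupport g) :
    MemLp g 2 π₃ :=
  (hc.memLp_of_hasCompactSupport hcs).mono_measure pi3_le

lemma hcs_absmul {α : Type*} [TopologicalSpace α] {u v : α → ℝ} (hu : HasCompactSupport u) :
    HasCompactSupport fun a => |u a * v a| := by
  apply hu.mono
  intro a ha
  simp only [Function.mem_support, ne_eq] at ha ⊢
  intro h0; exact ha (by rw [h0]; simp)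

lemma hcs_sq {α : Type*} [TopologicalSpace α] {u : α → ℝ} (hu : HasCompactSupport u) :
    HasCompactSupport fun a => u a ^ 2 := by
  apply hu.mono
  intro a ha
  simp only [Function.mem_support, ne_eq] at ha ⊢
  intro h0; exact ha (by rw [h0]; ring)

lemma step3 (hG : ContDiff ℝ (⊤ : ℕ∞) G) (hs : HasCompactSupport G) {t : ℝ} (ht : 0 < t)
    (y x : ℝ) :
    G ((t, y), x) ^ 2 ≤ 2 * Real.sqrt (∫ s, G ((s, y), x) ^ 2 ∂μ0)
      * Real.sqrt (∫ s, Dt G ((s, y), x) ^ 2 ∂μ0) := by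
  have hAc : Continuous (fun s : ℝ => ((s, y), x)) := by continuity
  have hACD : ContDiff ℝ 1 (fun s : ℝ => ((s, y), x)) :=
    (contDiff_id.prodMk contDiff_const).prodMk contDiff_const
  set g : ℝ → ℝ := fun s => G ((s, y), x) with hgdef
  have hg1 : ContDiff ℝ 1 g := (hG.of_le (by simp)).comp hACD
  have hgs : HasCompactSupport g :=
    retract hs (fun s : ℝ => ((s, y), x)) (continuous_fst.comp continuous_fst) (fun _ => rfl)
  have hderiv : deriv g = fun s => Dt G ((s, y), x) :=
    funext fun s => (slice_t (hG.differentiable (by simp)) y x s).deriv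
  have h1 : g t ^ 2 ≤ 2 * ∫ s in Ioi (0:ℝ), |g s * deriv g s| := oneD_pos hg1 hgs ht
  rw [hderiv] at h1
  have hDtc : Continuous fun s => Dt G ((s, y), x) := (contDiff_Dt hG).continuous.comp hAc
  have hDts : HasCompactSupport fun s => Dt G ((s, y), x) :=
    retract (hcs_Dt hs) (fun s : ℝ => ((s, y), x)) (continuous_fst.comp continuous_fst)
      (fun _ => rfl)
  have hCS := cs μ0 (memLp_mu0 hg1.continuous hgs) (memLp_mu0 hDtc hDts)
  calc g t ^ 2 ≤ 2 * ∫ s in Ioi (0:ℝ), |g s * Dt G ((s, y), x)| := h1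
    _ = 2 * ∫ s, |g s * Dt G ((s, y), x)| ∂μ0 := rfl
    _ ≤ 2 * (Real.sqrt (∫ s, g s ^ 2 ∂μ0) * Real.sqrt (∫ s, Dt G ((s, y), x) ^ 2 ∂μ0)) := by
        have h2 : (0:ℝ) ≤ 2 := by norm_num
        exact mul_le_mul_of_nonneg_left hCS h2
    _ = 2 * Real.sqrt (∫ s, g s ^ 2 ∂μ0) * Real.sqrt (∫ s, Dt G ((s, y), x) ^ 2 ∂μ0) := by
        ring

lemma step2 (hG : ContDiff ℝ (⊤ : ℕ∞) G) (hs : HasCompactSupport G) (y x : ℝ) :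
    ∫ s, G ((s, y), x) ^ 2 ∂μ0 ≤ 2 * Real.sqrt (∫ w, G (w, x) ^ 2 ∂π₂)
      * Real.sqrt (∫ w, Dy G (w, x) ^ 2 ∂π₂) := by
  have hGc := hG.continuous
  set H : ℝ × ℝ → ℝ := fun w => G (w, x) with hHdef
  set H' : ℝ × ℝ → ℝ := fun w => Dy G (w, x) with hH'def
  have hHc : Continuous H := hGc.comp (by continuity)
  have hHs : HasCompactSupport H :=
    retract hs (fun w : ℝ × ℝ => (w, x)) continuous_fst (fun _ => rfl)
  have hH'c : Continuous H' := (contDiff_Dy hG).continuous.comp (by continuity)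
  have hH's : HasCompactSupport H' :=
    retract (hcs_Dy hs) (fun w : ℝ × ℝ => (w, x)) continuous_fst (fun _ => rfl)
  set K : ℝ × ℝ → ℝ := fun w => |H w * H' w| with hKdef
  have hKint : Integrable K π₂ :=
    (((hHc.mul hH'c).abs).integrable_of_hasCompactSupport (hcs_absmul hHs)).mono_measure pi2_le
  have pointwise : ∀ s : ℝ, G ((s, y), x) ^ 2 ≤ 2 * ∫ r, K (s, r) := by
    intro s
    have hACD : ContDiff ℝ 1 (fun r : ℝ => ((s, r), x)) :=
      (contDiff_const.prodMk contDiff_id).prodMk contDiff_const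
    set gs : ℝ → ℝ := fun r => G ((s, r), x) with hgsdef
    have hg1 : ContDiff ℝ 1 gs := (hG.of_le (by simp)).comp hACD
    have hgs2 : HasCompactSupport gs :=
      retract hs (fun r : ℝ => ((s, r), x)) (continuous_snd.comp continuous_fst) (fun _ => rfl)
    have hderiv : deriv gs = fun r => Dy G ((s, r), x) :=
      funext fun r => (slice_y (hG.differentiable (by simp)) s x r).deriv
    have := oneD_all hg1 hgs2 y
    rw [hderiv] at this
    exact this
  have int1 : Integrable (fun s : ℝ => G ((s, y), x) ^ 2) μ0 := by
    have hc : Continuous fun s : ℝ => G ((s, y), x) ^ 2 := by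
      apply Continuous.pow
      exact hGc.comp (by continuity)
    have hcs2 : HasCompactSupport fun s : ℝ => G ((s, y), x) ^ 2 :=
      hcs_sq (retract hs (fun s : ℝ => ((s, y), x)) (continuous_fst.comp continuous_fst)
        (fun _ => rfl))
    exact (hc.integrable_of_hasCompactSupport hcs2).mono_measure mu0_le
  have int2 : Integrable (fun s : ℝ => 2 * ∫ r, K (s, r)) μ0 := by
    have := hKint.integral_prod_left
    exact this.const_mul 2
  have mono := integral_mono (μ := μ0) int1 int2 pointwise
  have fub : ∫ s, ∫ r, K (s, r) ∂(volume : Measure ℝ) ∂μ0 = ∫ w, K w ∂π₂ := by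
    have := integral_integral (μ := μ0) (ν := (volume : Measure ℝ))
      (f := fun s r => K (s, r)) hKint
    exact this
  have hCS := cs π₂ (memLp_pi2 hHc hHs) (memLp_pi2 hH'c hH's)
  calc ∫ s, G ((s, y), x) ^ 2 ∂μ0 ≤ ∫ s, 2 * ∫ r, K (s, r) ∂(volume : Measure ℝ) ∂μ0 := mono
    _ = 2 * ∫ s, ∫ r, K (s, r) ∂(volume : Measure ℝ) ∂μ0 := integral_const_mul 2 _
    _ = 2 * ∫ w, K w ∂π₂ := by rw [fub]
    _ ≤ 2 * (Real.sqrt (∫ w, H w ^ 2 ∂π₂) * Real.sqrt (∫ w, H' w ^ 2 ∂π₂)) := by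
        exact mul_le_mul_of_nonneg_left hCS (by norm_num)
    _ = 2 * Real.sqrt (∫ w, G (w, x) ^ 2 ∂π₂) * Real.sqrt (∫ w, Dy G (w, x) ^ 2 ∂π₂) := by
        ring

lemma step1 (hG : ContDiff ℝ (⊤ : ℕ∞) G) (hs : HasCompactSupport G) (x : ℝ) :
    ∫ w, G (w, x) ^ 2 ∂π₂ ≤ 2 * Real.sqrt (∫ q, G q ^ 2 ∂π₃)
      * Real.sqrt (∫ q, Dx G q ^ 2 ∂π₃) := by
  have hGc := hG.continuous
  set K : (ℝ × ℝ) × ℝ → ℝ := fun q => |G q * Dx G q| with hKdef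
  have hKint : Integrable K π₃ :=
    (((hGc.mul (contDiff_Dx hG).continuous).abs).integrable_of_hasCompactSupport
      (hcs_absmul hs)).mono_measure pi3_le
  have pointwise : ∀ w : ℝ × ℝ, G (w, x) ^ 2 ≤ 2 * ∫ r, K (w, r) := by
    intro w
    have hACD : ContDiff ℝ 1 (fun r : ℝ => (w, r)) := contDiff_const.prodMk contDiff_id
    set gw : ℝ → ℝ := fun r => G (w, r) with hgwdef
    have hg1 : ContDiff ℝ 1 gw := (hG.of_le (by simp)).comp hACD
    have hgs2 : HasCompactSupport gw :=
      retract hs (fun r : ℝ => (w, r)) continuous_snd (fun _ => rfl)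
    have hderiv : deriv gw = fun r => Dx G (w, r) :=
      funext fun r => (slice_x (hG.differentiable (by simp)) w.1 w.2 r).deriv
    have := oneD_all hg1 hgs2 x
    rw [hderiv] at this
    exact this
  have int1 : Integrable (fun w : ℝ × ℝ => G (w, x) ^ 2) π₂ := by
    have hc : Continuous fun w : ℝ × ℝ => G (w, x) ^ 2 := by
      apply Continuous.pow
      exact hGc.comp (by continuity)
    have hcs2 : HasCompactSupport fun w : ℝ × ℝ => G (w, x) ^ 2 :=
      hcs_sq (retract hs (fun w : ℝ × ℝ => (w, x)) continuous_fst (fun _ => rfl))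
    exact (hc.integrable_of_hasCompactSupport hcs2).mono_measure pi2_le
  have int2 : Integrable (fun w : ℝ × ℝ => 2 * ∫ r, K (w, r)) π₂ := by
    have := hKint.integral_prod_left
    exact this.const_mul 2
  have mono := integral_mono (μ := π₂) int1 int2 pointwise
  have fub : ∫ w, ∫ r, K (w, r) ∂(volume : Measure ℝ) ∂π₂ = ∫ q, K q ∂π₃ := by
    have := integral_integral (μ := π₂) (ν := (volume : Measure ℝ))
      (f := fun w r => K (w, r)) hKint
    exact this
  have hCS := cs π₃ (memLp_pi3 hGc hs) (memLp_pi3 (contDiff_Dx hG).continuous (hcs_Dx hs))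
  calc ∫ w, G (w, x) ^ 2 ∂π₂ ≤ ∫ w, 2 * ∫ r, K (w, r) ∂(volume : Measure ℝ) ∂π₂ := mono
    _ = 2 * ∫ w, ∫ r, K (w, r) ∂(volume : Measure ℝ) ∂π₂ := integral_const_mul 2 _
    _ = 2 * ∫ q, K q ∂π₃ := by rw [fub]
    _ ≤ 2 * (Real.sqrt (∫ q, G q ^ 2 ∂π₃) * Real.sqrt (∫ q, Dx G q ^ 2 ∂π₃)) := by
        exact mul_le_mul_of_nonneg_left hCS (by norm_num)
    _ = 2 * Real.sqrt (∫ q, G q ^ 2 ∂π₃) * Real.sqrt (∫ q, Dx G q ^ 2 ∂π₃) := by ring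

end AgmonAux

namespace AgmonAux

noncomputable def NN (G : (ℝ × ℝ) × ℝ → ℝ) : ℝ := Real.sqrt (∫ q, G q ^ 2 ∂π₃)

lemma NN_nonneg (G : (ℝ × ℝ) × ℝ → ℝ) : 0 ≤ NN G := Real.sqrt_nonneg _

lemma core {G : (ℝ × ℝ) × ℝ → ℝ} (hG : ContDiff ℝ (⊤ : ℕ∞) G) (hs : HasCompactSupport G)
    {q : (ℝ × ℝ) × ℝ} (ht : 0 < q.1.1) :
    G q ^ 8 ≤ 4096 * NN G * NN (Dx G) * NN (Dy G) * NN (Dx (Dy G)) * NN (Dt G)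
      * NN (Dx (Dt G)) * NN (Dy (Dt G)) * NN (Dx (Dy (Dt G))) := by
  obtain ⟨⟨t, y⟩, x⟩ := q
  simp only at ht
  set a := ∫ s, G ((s, y), x) ^ 2 ∂μ0 with hadef
  set a' := ∫ s, Dt G ((s, y), x) ^ 2 ∂μ0 with ha'def
  set b := ∫ w, G (w, x) ^ 2 ∂π₂ with hbdef
  set b' := ∫ w, Dy G (w, x) ^ 2 ∂π₂ with hb'def
  set d := ∫ w, Dt G (w, x) ^ 2 ∂π₂ with hddef
  set d' := ∫ w, Dy (Dt G) (w, x) ^ 2 ∂π₂ with hd'def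
  set c1 := ∫ p, G p ^ 2 ∂π₃ with hc1def
  set c2 := ∫ p, Dx G p ^ 2 ∂π₃ with hc2def
  set c3 := ∫ p, Dy G p ^ 2 ∂π₃ with hc3def
  set c4 := ∫ p, Dx (Dy G) p ^ 2 ∂π₃ with hc4def
  set c5 := ∫ p, Dt G p ^ 2 ∂π₃ with hc5def
  set c6 := ∫ p, Dx (Dt G) p ^ 2 ∂π₃ with hc6def
  set c7 := ∫ p, Dy (Dt G) p ^ 2 ∂π₃ with hc7def
  set c8 := ∫ p, Dx (Dy (Dt G)) p ^ 2 ∂π₃ with hc8def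
  have ha : 0 ≤ a := integral_nonneg fun s => sq_nonneg _
  have ha' : 0 ≤ a' := integral_nonneg fun s => sq_nonneg _
  have hb : 0 ≤ b := integral_nonneg fun s => sq_nonneg _
  have hb' : 0 ≤ b' := integral_nonneg fun s => sq_nonneg _
  have hd : 0 ≤ d := integral_nonneg fun s => sq_nonneg _
  have hd' : 0 ≤ d' := integral_nonneg fun s => sq_nonneg _
  have h3 : G ((t, y), x) ^ 2 ≤ 2 * Real.sqrt a * Real.sqrt a' := step3 hG hs ht y x
  have h2a : a ≤ 2 * Real.sqrt b * Real.sqrt b' := step2 hG hs y x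
  have h2a' : a' ≤ 2 * Real.sqrt d * Real.sqrt d' :=
    step2 (contDiff_Dt hG) (hcs_Dt hs) y x
  have h1b : b ≤ 2 * Real.sqrt c1 * Real.sqrt c2 := step1 hG hs x
  have h1b' : b' ≤ 2 * Real.sqrt c3 * Real.sqrt c4 :=
    step1 (contDiff_Dy hG) (hcs_Dy hs) x
  have h1d : d ≤ 2 * Real.sqrt c5 * Real.sqrt c6 :=
    step1 (contDiff_Dt hG) (hcs_Dt hs) x
  have h1d' : d' ≤ 2 * Real.sqrt c7 * Real.sqrt c8 :=
    step1 (contDiff_Dy (contDiff_Dt hG)) (hcs_Dy (hcs_Dt hs)) x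
  have haa : a ^ 2 ≤ 4 * (b * b') := by
    calc a ^ 2 ≤ (2 * Real.sqrt b * Real.sqrt b') ^ 2 := by
          apply pow_le_pow_left₀ ha h2a
      _ = 4 * (b * b') := by
          rw [mul_pow, mul_pow, Real.sq_sqrt hb, Real.sq_sqrt hb']; ring
  have haa' : a' ^ 2 ≤ 4 * (d * d') := by
    calc a' ^ 2 ≤ (2 * Real.sqrt d * Real.sqrt d') ^ 2 := by
          apply pow_le_pow_left₀ ha' h2a'
      _ = 4 * (d * d') := by
          rw [mul_pow, mul_pow, Real.sq_sqrt hd, Real.sq_sqrt hd']; ring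
  have hsq4 : ∀ z : ℝ, 0 ≤ z → Real.sqrt z ^ 4 = z ^ 2 := by
    intro z hz
    rw [show (4:ℕ) = 2 * 2 from rfl, pow_mul, Real.sq_sqrt hz]
  calc G ((t, y), x) ^ 8 = (G ((t, y), x) ^ 2) ^ 4 := by ring
    _ ≤ (2 * Real.sqrt a * Real.sqrt a') ^ 4 := by
        apply pow_le_pow_left₀ (sq_nonneg _) h3
    _ = 16 * (a ^ 2 * a' ^ 2) := by
        rw [mul_pow, mul_pow, hsq4 a ha, hsq4 a' ha']; ring
    _ ≤ 16 * ((4 * (b * b')) * (4 * (d * d'))) := by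
        have := mul_le_mul haa haa' (sq_nonneg a') (by positivity)
        nlinarith [this]
    _ = 256 * (b * b' * (d * d')) := by ring
    _ ≤ 256 * ((2 * Real.sqrt c1 * Real.sqrt c2) * (2 * Real.sqrt c3 * Real.sqrt c4)
        * ((2 * Real.sqrt c5 * Real.sqrt c6) * (2 * Real.sqrt c7 * Real.sqrt c8))) := by
        gcongr <;> positivity
    _ = 4096 * Real.sqrt c1 * Real.sqrt c2 * Real.sqrt c3 * Real.sqrt c4 * Real.sqrt c5
        * Real.sqrt c6 * Real.sqrt c7 * Real.sqrt c8 := by ring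
    _ = 4096 * NN G * NN (Dx G) * NN (Dy G) * NN (Dx (Dy G)) * NN (Dt G)
      * NN (Dx (Dt G)) * NN (Dy (Dt G)) * NN (Dx (Dy (Dt G))) := by rfl

end AgmonAux

namespace AgmonAux

/-- The coordinate map `((t,y),x) ↦ ![x,y,t]`. -/
def m (q : (ℝ × ℝ) × ℝ) : Fin 3 → ℝ := ![q.2, q.1.2, q.1.1]

lemma m_apply_two (q : (ℝ × ℝ) × ℝ) : m q 2 = q.1.1 := rfl

noncomputable def Φ : ((ℝ × ℝ) × ℝ) ≃ₗ[ℝ] (Fin 3 → ℝ) where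
  toFun := m
  invFun x := ((x 2, x 1), x 0)
  map_add' p q := by funext i; fin_cases i <;> simp [m]
  map_smul' c p := by funext i; fin_cases i <;> simp [m]
  left_inv p := rfl
  right_inv x := by funext i; fin_cases i <;> rfl

noncomputable def ΦC : ((ℝ × ℝ) × ℝ) ≃L[ℝ] (Fin 3 → ℝ) := Φ.toContinuousLinearEquiv

lemma ΦC_coe : (ΦC : ((ℝ × ℝ) × ℝ) → (Fin 3 → ℝ)) = m := rfl

lemma m_measurePreserving :
    MeasurePreserving m (volume : Measure ((ℝ × ℝ) × ℝ)) (volume : Measure (Fin 3 → ℝ)) := by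
  have e3 := (volume_preserving_funUnique (Fin 1) ℝ).symm _
  have e2 := (volume_preserving_piFinSuccAbove (fun _ : Fin 2 => ℝ) 0).symm _
  have e1 := (volume_preserving_piFinSuccAbove (fun _ : Fin 3 => ℝ) 0).symm _
  have hswap1 : MeasurePreserving (Prod.swap : ((ℝ × ℝ) × ℝ) → ℝ × (ℝ × ℝ))
      (volume : Measure ((ℝ × ℝ) × ℝ)) (volume : Measure (ℝ × (ℝ × ℝ))) :=
    Measure.measurePreserving_swap
  have hswap2 : MeasurePreserving (Prod.map (id : ℝ → ℝ) (Prod.swap : ℝ × ℝ → ℝ × ℝ))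
      (volume : Measure (ℝ × (ℝ × ℝ))) (volume : Measure (ℝ × (ℝ × ℝ))) :=
    (MeasurePreserving.id _).prod Measure.measurePreserving_swap
  have hmap3 : MeasurePreserving
      (Prod.map (id : ℝ → ℝ) (Prod.map (id : ℝ → ℝ)
        ⇑(MeasurableEquiv.funUnique (Fin 1) ℝ).symm))
      (volume : Measure (ℝ × (ℝ × ℝ))) volume :=
    (MeasurePreserving.id _).prod ((MeasurePreserving.id _).prod e3)
  have hmap2 : MeasurePreserving
      (Prod.map (id : ℝ → ℝ) ⇑(MeasurableEquiv.piFinSuccAbove (fun _ : Fin 2 => ℝ) 0).symm)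
      (volume : Measure (ℝ × (ℝ × (Fin 1 → ℝ)))) volume :=
    (MeasurePreserving.id _).prod e2
  have htot := (e1.comp (hmap2.comp (hmap3.comp (hswap2.comp hswap1))))
  have hfun : (⇑(MeasurableEquiv.piFinSuccAbove (fun _ : Fin 3 => ℝ) 0).symm ∘
      (Prod.map (id : ℝ → ℝ) ⇑(MeasurableEquiv.piFinSuccAbove (fun _ : Fin 2 => ℝ) 0).symm ∘
        (Prod.map (id : ℝ → ℝ) (Prod.map (id : ℝ → ℝ)
          ⇑(MeasurableEquiv.funUnique (Fin 1) ℝ).symm) ∘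
          (Prod.map (id : ℝ → ℝ) (Prod.swap : ℝ × ℝ → ℝ × ℝ) ∘
            (Prod.swap : ((ℝ × ℝ) × ℝ) → ℝ × (ℝ × ℝ)))))) = m := by
    funext q i
    fin_cases i <;> rfl
  rw [hfun] at htot
  exact htot

lemma m_measurableEmbedding : MeasurableEmbedding m := by
  rw [← ΦC_coe]
  exact ΦC.toHomeomorph.measurableEmbedding

lemma m_preimage_H3 : m ⁻¹' H3 = (Ioi (0:ℝ) ×ˢ univ) ×ˢ univ := by
  ext q
  simp [H3, m_apply_two, Set.mem_prod]

lemma transfer (h : (Fin 3 → ℝ) → ℝ) :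
    ∫ x in H3, h x ^ 2 = ∫ p, h (m p) ^ 2 ∂π₃ := by
  have := m_measurePreserving.setIntegral_preimage_emb m_measurableEmbedding
    (fun x => h x ^ 2) H3
  rw [← this, m_preimage_H3, pi3_eq]

end AgmonAux

namespace AgmonAux

lemma contDiff_pd (i : Fin 3) {f : (Fin 3 → ℝ) → ℝ} (hf : ContDiff ℝ (⊤ : ℕ∞) f) :
    ContDiff ℝ (⊤ : ℕ∞) (pd i f) :=
  (hf.fderiv_right (by simp)).clm_apply contDiff_const

lemma pd_comp {h : (Fin 3 → ℝ) → ℝ} (hh : Differentiable ℝ h) (i : Fin 3)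
    (v : (ℝ × ℝ) × ℝ) (hv : m v = Pi.single i 1) (q : (ℝ × ℝ) × ℝ) :
    pd i h (m q) = fderiv ℝ (fun p => h (m p)) q v := by
  have hder : HasFDerivAt (fun p => h (m p))
      ((fderiv ℝ h (m q)).comp (ΦC : ((ℝ × ℝ) × ℝ) →L[ℝ] (Fin 3 → ℝ))) q := by
    have h1 : HasFDerivAt h (fderiv ℝ h (m q)) (m q) := (hh (m q)).hasFDerivAt
    have h2 : HasFDerivAt (⇑ΦC) (ΦC : ((ℝ × ℝ) × ℝ) →L[ℝ] (Fin 3 → ℝ)) q :=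
      ΦC.toContinuousLinearMap.hasFDerivAt
    have := h1.comp q (ΦC_coe ▸ h2)
    exact this
  rw [hder.fderiv]
  simp only [ContinuousLinearMap.coe_comp', Function.comp_apply,
    ContinuousLinearEquiv.coe_coe]
  rw [show ΦC v = m v from congrFun ΦC_coe v, hv]
  rfl

lemma m_vx : m ((0, 0), 1) = Pi.single (0 : Fin 3) 1 := by
  funext i; fin_cases i <;> simp [m, Pi.single_apply]

lemma m_vy : m ((0, 1), 0) = Pi.single (1 : Fin 3) 1 := by
  funext i; fin_cases i <;> simp [m, Pi.single_apply]

lemma m_vt : m ((1, 0), 0) = Pi.single (2 : Fin 3) 1 := by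
  funext i; fin_cases i <;> simp [m, Pi.single_apply]

end AgmonAux

open AgmonAux in
/-- Anisotropic Agmon-type Sobolev inequality on the half-space. -/
theorem anisotropic_agmon :
    ∃ C : ℝ, 0 < C ∧ ∀ f : (Fin 3 → ℝ) → ℝ,
      ContDiff ℝ (⊤ : ℕ∞) f → HasCompactSupport f →
      ∀ x ∈ H3,
        |f x| ≤ C * L2 f ^ ((1:ℝ)/8) * L2 (pd 0 f) ^ ((1:ℝ)/8)
          * L2 (pd 1 f) ^ ((1:ℝ)/8) * L2 (pd 0 (pd 1 f)) ^ ((1:ℝ)/8)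
          * L2 (pd 2 f) ^ ((1:ℝ)/8) * L2 (pd 0 (pd 2 f)) ^ ((1:ℝ)/8)
          * L2 (pd 1 (pd 2 f)) ^ ((1:ℝ)/8) * L2 (pd 0 (pd 1 (pd 2 f))) ^ ((1:ℝ)/8) := by
  refine ⟨(4096 : ℝ) ^ ((1:ℝ)/8), by positivity, ?_⟩
  intro f hf hsf x hx
  set F : (ℝ × ℝ) × ℝ → ℝ := fun p => f (m p) with hFdef
  have hFc : ContDiff ℝ (⊤ : ℕ∞) F := by
    have : ContDiff ℝ (⊤ : ℕ∞) (⇑ΦC) := ΦC.toContinuousLinearMap.contDiff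
    exact hf.comp (ΦC_coe ▸ this)
  have hFs : HasCompactSupport F := by
    have h1 : HasCompactSupport (f ∘ ⇑ΦC) :=
      hsf.comp_isClosedEmbedding ΦC.toHomeomorph.isClosedEmbedding
    rw [ΦC_coe] at h1
    exact h1
  set q : (ℝ × ℝ) × ℝ := ((x 2, x 1), x 0) with hqdef
  have hmq : m q = x := by funext i; fin_cases i <;> rfl
  have ht : 0 < q.1.1 := hx
  have hdf : Differentiable ℝ f := hf.differentiable (by simp)
  -- identifications of the eight functions
  have eDx : ∀ p, pd 0 f (m p) = Dx F p := fun p => pd_comp hdf 0 ((0, 0), 1) m_vx p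
  have eDy : ∀ p, pd 1 f (m p) = Dy F p := fun p => pd_comp hdf 1 ((0, 1), 0) m_vy p
  have eDt : ∀ p, pd 2 f (m p) = Dt F p := fun p => pd_comp hdf 2 ((1, 0), 0) m_vt p
  have eDxDy : ∀ p, pd 0 (pd 1 f) (m p) = Dx (Dy F) p := by
    intro p
    rw [pd_comp ((contDiff_pd 1 hf).differentiable (by simp)) 0 ((0, 0), 1) m_vx p]
    rw [show (fun p => pd 1 f (m p)) = Dy F from funext eDy]
    rfl
  have eDxDt : ∀ p, pd 0 (pd 2 f) (m p) = Dx (Dt F) p := by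
    intro p
    rw [pd_comp ((contDiff_pd 2 hf).differentiable (by simp)) 0 ((0, 0), 1) m_vx p]
    rw [show (fun p => pd 2 f (m p)) = Dt F from funext eDt]
    rfl
  have eDyDt : ∀ p, pd 1 (pd 2 f) (m p) = Dy (Dt F) p := by
    intro p
    rw [pd_comp ((contDiff_pd 2 hf).differentiable (by simp)) 1 ((0, 1), 0) m_vy p]
    rw [show (fun p => pd 2 f (m p)) = Dt F from funext eDt]
    rfl
  have eDxDyDt : ∀ p, pd 0 (pd 1 (pd 2 f)) (m p) = Dx (Dy (Dt F)) p := by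
    intro p
    rw [pd_comp ((contDiff_pd 1 (contDiff_pd 2 hf)).differentiable (by simp)) 0
      ((0, 0), 1) m_vx p]
    rw [show (fun p => pd 1 (pd 2 f) (m p)) = Dy (Dt F) from funext eDyDt]
    rfl
  -- L2 norms transfer
  have E0 : L2 f = NN F := by rw [L2, NN, transfer f]
  have E1 : L2 (pd 0 f) = NN (Dx F) := by
    rw [L2, NN, transfer (pd 0 f)]; simp only [eDx]
  have E2 : L2 (pd 1 f) = NN (Dy F) := by
    rw [L2, NN, transfer (pd 1 f)]; simp only [eDy]
  have E3 : L2 (pd 0 (pd 1 f)) = NN (Dx (Dy F)) := by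
    rw [L2, NN, transfer (pd 0 (pd 1 f))]; simp only [eDxDy]
  have E4 : L2 (pd 2 f) = NN (Dt F) := by
    rw [L2, NN, transfer (pd 2 f)]; simp only [eDt]
  have E5 : L2 (pd 0 (pd 2 f)) = NN (Dx (Dt F)) := by
    rw [L2, NN, transfer (pd 0 (pd 2 f))]; simp only [eDxDt]
  have E6 : L2 (pd 1 (pd 2 f)) = NN (Dy (Dt F)) := by
    rw [L2, NN, transfer (pd 1 (pd 2 f))]; simp only [eDyDt]
  have E7 : L2 (pd 0 (pd 1 (pd 2 f))) = NN (Dx (Dy (Dt F))) := by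
    rw [L2, NN, transfer (pd 0 (pd 1 (pd 2 f)))]; simp only [eDxDyDt]
  have hcore := core hFc hFs ht
  -- pass to eighth roots
  have hfx : f x = F q := by rw [hFdef]; simp only; rw [hmq]
  have habs8 : |F q| ^ (8:ℕ) = F q ^ 8 := by
    rw [pow_abs, abs_of_nonneg (by positivity)]
  have h0 : (0:ℝ) ≤ |F q| := abs_nonneg _
  have key : |F q| = (F q ^ 8) ^ ((1:ℝ)/8) := by
    rw [← habs8, ← Real.rpow_natCast (|F q|) 8, ← Real.rpow_mul h0]
    norm_num
  have n0 : (0:ℝ) ≤ 4096 := by norm_num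
  have n1 : (0:ℝ) ≤ 4096 * NN F := mul_nonneg n0 (NN_nonneg _)
  have n2 : (0:ℝ) ≤ 4096 * NN F * NN (Dx F) := mul_nonneg n1 (NN_nonneg _)
  have n3 : (0:ℝ) ≤ 4096 * NN F * NN (Dx F) * NN (Dy F) := mul_nonneg n2 (NN_nonneg _)
  have n4 : (0:ℝ) ≤ 4096 * NN F * NN (Dx F) * NN (Dy F) * NN (Dx (Dy F)) :=
    mul_nonneg n3 (NN_nonneg _)
  have n5 : (0:ℝ) ≤ 4096 * NN F * NN (Dx F) * NN (Dy F) * NN (Dx (Dy F)) * NN (Dt F) :=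
    mul_nonneg n4 (NN_nonneg _)
  have n6 : (0:ℝ) ≤ 4096 * NN F * NN (Dx F) * NN (Dy F) * NN (Dx (Dy F)) * NN (Dt F)
      * NN (Dx (Dt F)) := mul_nonneg n5 (NN_nonneg _)
  have n7 : (0:ℝ) ≤ 4096 * NN F * NN (Dx F) * NN (Dy F) * NN (Dx (Dy F)) * NN (Dt F)
      * NN (Dx (Dt F)) * NN (Dy (Dt F)) := mul_nonneg n6 (NN_nonneg _)
  calc |f x| = |F q| := by rw [hfx]
    _ = (F q ^ 8) ^ ((1:ℝ)/8) := key
    _ ≤ (4096 * NN F * NN (Dx F) * NN (Dy F) * NN (Dx (Dy F)) * NN (Dt F)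
        * NN (Dx (Dt F)) * NN (Dy (Dt F)) * NN (Dx (Dy (Dt F)))) ^ ((1:ℝ)/8) := by
        apply Real.rpow_le_rpow (by positivity) hcore (by norm_num)
    _ = (4096:ℝ) ^ ((1:ℝ)/8) * NN F ^ ((1:ℝ)/8) * NN (Dx F) ^ ((1:ℝ)/8)
        * NN (Dy F) ^ ((1:ℝ)/8) * NN (Dx (Dy F)) ^ ((1:ℝ)/8) * NN (Dt F) ^ ((1:ℝ)/8)
        * NN (Dx (Dt F)) ^ ((1:ℝ)/8) * NN (Dy (Dt F)) ^ ((1:ℝ)/8)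
        * NN (Dx (Dy (Dt F))) ^ ((1:ℝ)/8) := by
        rw [Real.mul_rpow n7 (NN_nonneg _), Real.mul_rpow n6 (NN_nonneg _),
          Real.mul_rpow n5 (NN_nonneg _), Real.mul_rpow n4 (NN_nonneg _),
          Real.mul_rpow n3 (NN_nonneg _), Real.mul_rpow n2 (NN_nonneg _),
          Real.mul_rpow n1 (NN_nonneg _), Real.mul_rpow n0 (NN_nonneg _)]
    _ = (4096:ℝ) ^ ((1:ℝ)/8) * L2 f ^ ((1:ℝ)/8) * L2 (pd 0 f) ^ ((1:ℝ)/8)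
        * L2 (pd 1 f) ^ ((1:ℝ)/8) * L2 (pd 0 (pd 1 f)) ^ ((1:ℝ)/8)
        * L2 (pd 2 f) ^ ((1:ℝ)/8) * L2 (pd 0 (pd 2 f)) ^ ((1:ℝ)/8)
        * L2 (pd 1 (pd 2 f)) ^ ((1:ℝ)/8) * L2 (pd 0 (pd 1 (pd 2 f))) ^ ((1:ℝ)/8) := by
        rw [E0, E1, E2, E3, E4, E5, E6, E7]
end

section
/- Let f, g, h be smooth compactly supported functions on the half-space ℝ³₊. Then ∫_{ℝ³₊} |f g h| dx ≲ ‖f‖_{L²}^{1/2} ‖∂₁f‖_{L²}^{1/2} ‖g‖_{L²}^{1/2} ‖∂₂g‖_{L²}^{1/2} ‖h‖_{L²}^{1/2} ‖∂₃h‖_{L²}^{1/2}, where the implicit constant is universal. -/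
set_option maxHeartbeats 1000000


open MeasureTheory

open Set

namespace AnisoAux

/-- Cauchy–Schwarz for lower integrals. -/
lemma cs {α : Type*} [MeasurableSpace α] (ν : Measure α) {p q : α → ENNReal}
    (hp : AEMeasurable p ν) (hq : AEMeasurable q ν) :
    ∫⁻ t, (p t) ^ ((1:ℝ)/2) * (q t) ^ ((1:ℝ)/2) ∂ν ≤
      (∫⁻ t, p t ∂ν) ^ ((1:ℝ)/2) * (∫⁻ t, q t ∂ν) ^ ((1:ℝ)/2) := by
  have h22 : Real.HolderConjugate 2 2 := Real.HolderConjugate.two_two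
  have key := ENNReal.lintegral_mul_le_Lp_mul_Lq ν h22 (hp.pow_const ((1:ℝ)/2))
    (hq.pow_const ((1:ℝ)/2))
  have e : ∀ r : ENNReal, (r ^ ((1:ℝ)/2)) ^ (2:ℝ) = r := by
    intro r; rw [← ENNReal.rpow_mul]; norm_num
  simp only [Pi.mul_apply, e] at key
  exact key

/-- Iterated-integral Loomis–Whitney type inequality in 3 variables. -/
lemma lw3 (ν₀ ν₁ ν₂ : Measure ℝ) [SigmaFinite ν₀] [SigmaFinite ν₁] [SigmaFinite ν₂]
    {a b c : ℝ → ℝ → ENNReal}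
    (ha : Measurable (Function.uncurry a)) (hb : Measurable (Function.uncurry b))
    (hc : Measurable (Function.uncurry c)) :
    ∫⁻ z, (∫⁻ y, (∫⁻ x, (a y z) ^ ((1:ℝ)/2) * ((b x z) ^ ((1:ℝ)/2) * (c x y) ^ ((1:ℝ)/2)) ∂ν₀) ∂ν₁) ∂ν₂ ≤
      (∫⁻ z, (∫⁻ y, a y z ∂ν₁) ∂ν₂) ^ ((1:ℝ)/2) * ((∫⁻ z, (∫⁻ x, b x z ∂ν₀) ∂ν₂) ^ ((1:ℝ)/2) *
      (∫⁻ y, (∫⁻ x, c x y ∂ν₀) ∂ν₁) ^ ((1:ℝ)/2)) := by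
  have hbx : ∀ z, Measurable fun x => b x z := fun z =>
    hb.comp (measurable_id.prodMk measurable_const)
  have hcx : ∀ y, Measurable fun x => c x y := fun y =>
    hc.comp (measurable_id.prodMk measurable_const)
  have hay : ∀ z, Measurable fun y => a y z := fun z =>
    ha.comp (measurable_id.prodMk measurable_const)
  set B : ℝ → ENNReal := fun z => ∫⁻ x, b x z ∂ν₀ with hB
  set C : ℝ → ENNReal := fun y => ∫⁻ x, c x y ∂ν₀ with hC
  set A : ℝ → ENNReal := fun z => ∫⁻ y, a y z ∂ν₁ with hA
  have hBm : Measurable B := by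
    apply Measurable.lintegral_prod_right (f := fun z x => b x z)
    exact hb.comp measurable_swap
  have hCm : Measurable C := by
    apply Measurable.lintegral_prod_right (f := fun y x => c x y)
    exact hc.comp measurable_swap
  have hAm : Measurable A := by
    apply Measurable.lintegral_prod_right (f := fun z y => a y z)
    exact ha.comp measurable_swap
  calc ∫⁻ z, (∫⁻ y, (∫⁻ x, (a y z) ^ ((1:ℝ)/2) * ((b x z) ^ ((1:ℝ)/2) * (c x y) ^ ((1:ℝ)/2)) ∂ν₀) ∂ν₁) ∂ν₂
      ≤ ∫⁻ z, (∫⁻ y, (a y z) ^ ((1:ℝ)/2) * ((B z) ^ ((1:ℝ)/2) * (C y) ^ ((1:ℝ)/2)) ∂ν₁) ∂ν₂ := by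
        refine lintegral_mono fun z => lintegral_mono fun y => ?_
        rw [lintegral_const_mul (f := fun x => (b x z) ^ ((1:ℝ)/2) * (c x y) ^ ((1:ℝ)/2)) _ (((hbx z).pow_const _).mul ((hcx y).pow_const _))]
        exact mul_le_mul_right (cs ν₀ (hbx z).aemeasurable (hcx y).aemeasurable) _
    _ ≤ ∫⁻ z, (A z) ^ ((1:ℝ)/2) * ((B z) ^ ((1:ℝ)/2) * (∫⁻ y, C y ∂ν₁) ^ ((1:ℝ)/2)) ∂ν₂ := by
        refine lintegral_mono fun z => ?_
        have : ∀ y, (a y z) ^ ((1:ℝ)/2) * ((B z) ^ ((1:ℝ)/2) * (C y) ^ ((1:ℝ)/2))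
            = (B z) ^ ((1:ℝ)/2) * ((a y z) ^ ((1:ℝ)/2) * (C y) ^ ((1:ℝ)/2)) := by
          intro y; ring
        simp_rw [this]
        rw [lintegral_const_mul (f := fun y => (a y z) ^ ((1:ℝ)/2) * (C y) ^ ((1:ℝ)/2)) _ (((hay z).pow_const _).mul (hCm.pow_const _))]
        calc (B z) ^ ((1:ℝ)/2) * ∫⁻ y, (a y z) ^ ((1:ℝ)/2) * (C y) ^ ((1:ℝ)/2) ∂ν₁
            ≤ (B z) ^ ((1:ℝ)/2) * ((A z) ^ ((1:ℝ)/2) * (∫⁻ y, C y ∂ν₁) ^ ((1:ℝ)/2)) :=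
              mul_le_mul_right (cs ν₁ (hay z).aemeasurable hCm.aemeasurable) _
          _ = (A z) ^ ((1:ℝ)/2) * ((B z) ^ ((1:ℝ)/2) * (∫⁻ y, C y ∂ν₁) ^ ((1:ℝ)/2)) := by ring
    _ ≤ (∫⁻ z, A z ∂ν₂) ^ ((1:ℝ)/2) * ((∫⁻ z, B z ∂ν₂) ^ ((1:ℝ)/2) * (∫⁻ y, C y ∂ν₁) ^ ((1:ℝ)/2)) := by
        have : ∀ z, (A z) ^ ((1:ℝ)/2) * ((B z) ^ ((1:ℝ)/2) * (∫⁻ y, C y ∂ν₁) ^ ((1:ℝ)/2))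
            = (∫⁻ y, C y ∂ν₁) ^ ((1:ℝ)/2) * ((A z) ^ ((1:ℝ)/2) * (B z) ^ ((1:ℝ)/2)) := by
          intro z; ring
        simp_rw [this]
        rw [lintegral_const_mul (f := fun z => (A z) ^ ((1:ℝ)/2) * (B z) ^ ((1:ℝ)/2)) _ ((hAm.pow_const _).mul (hBm.pow_const _))]
        calc (∫⁻ y, C y ∂ν₁) ^ ((1:ℝ)/2) * ∫⁻ z, (A z) ^ ((1:ℝ)/2) * (B z) ^ ((1:ℝ)/2) ∂ν₂
            ≤ (∫⁻ y, C y ∂ν₁) ^ ((1:ℝ)/2) *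
              ((∫⁻ z, A z ∂ν₂) ^ ((1:ℝ)/2) * (∫⁻ z, B z ∂ν₂) ^ ((1:ℝ)/2)) :=
              mul_le_mul_right (cs ν₂ hAm.aemeasurable hBm.aemeasurable) _
          _ = _ := by ring

lemma pd_cont {f : (Fin 3 → ℝ) → ℝ} (hf : ContDiff ℝ (⊤ : ℕ∞) f) (i : Fin 3) : Continuous (pd i f) :=
  (hf.continuous_fderiv (by simp)).clm_apply continuous_const

lemma pd_compact_support {f : (Fin 3 → ℝ) → ℝ} (hs : HasCompactSupport f) (i : Fin 3) :
    HasCompactSupport (pd i f) := by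
  have := hs.fderiv (𝕜 := ℝ)
  exact this.comp_left (g := fun L : (Fin 3 → ℝ) →L[ℝ] ℝ => L (Pi.single i 1)) (by simp)

lemma update_cont (x : Fin 3 → ℝ) (i : Fin 3) : Continuous fun t : ℝ => Function.update x i t := by
  refine continuous_pi fun j => ?_
  rcases eq_or_ne j i with rfl | hj
  · simpa [Function.update_apply] using continuous_id'
  · simp only [Function.update_apply, if_neg hj]
    exact continuous_const

/-- The 1-D FTC pointwise bound. -/
lemma pointwise_sq_le {f : (Fin 3 → ℝ) → ℝ} (hf : ContDiff ℝ (⊤ : ℕ∞) f) (hsupp : HasCompactSupport f)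
    (i : Fin 3) (x : Fin 3 → ℝ) :
    ENNReal.ofReal (f x ^ 2) ≤
      2 * ∫⁻ t in Ici (x i), ENNReal.ofReal |f (Function.update x i t)| *
        ENNReal.ofReal |pd i f (Function.update x i t)| := by
  obtain ⟨R, hR⟩ : ∃ R, tsupport f ⊆ Metric.closedBall 0 R :=
    hsupp.isBounded.subset_closedBall 0
  set b : ℝ := max (x i) (|R| + 1) with hbdef
  have hxb : x i ≤ b := le_max_left _ _
  set φ : ℝ → ℝ := fun t => f (Function.update x i t) with hφdef
  set ψ : ℝ → ℝ := fun t => pd i f (Function.update x i t) with hψdef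
  have hud : ∀ t : ℝ, HasDerivAt (fun s : ℝ => Function.update x i s) (Pi.single i 1) t := by
    intro t
    set v : Fin 3 → ℝ := Pi.single i 1 with hv
    have heq : (fun s : ℝ => Function.update x i s)
        = fun s : ℝ => Function.update x i 0 + s • v := by
      funext s
      funext j
      by_cases h : j = i <;> simp [Function.update_apply, Pi.single_apply, h, hv]
    rw [heq]
    simpa using ((hasDerivAt_id t).smul_const v).const_add (Function.update x i 0)
  have hφd : ∀ t : ℝ, HasDerivAt φ (ψ t) t := fun t =>
    ((hf.differentiable (by simp)).differentiableAt.hasFDerivAt).comp_hasDerivAt t (hud t)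
  have hφc : Continuous φ := hf.continuous.comp (update_cont x i)
  have hψc : Continuous ψ := (pd_cont hf i).comp (update_cont x i)
  have hφb : φ b = 0 := by
    show f (Function.update x i b) = 0
    apply image_eq_zero_of_notMem_tsupport
    intro hmem
    have hball := hR hmem
    have hb1 : |R| + 1 ≤ b := le_max_right _ _
    have hcoord : |b| ≤ ‖Function.update x i b‖ := by
      simpa using norm_le_pi_norm (Function.update x i b) i
    rw [Metric.mem_closedBall, dist_zero_right] at hball
    have hbpos : 0 < b := lt_of_lt_of_le (by positivity) hb1
    have : |b| ≤ R := le_trans hcoord hball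
    rw [abs_of_pos hbpos] at this
    nlinarith [le_abs_self R]
  set d : ℝ → ℝ := fun t => ψ t * φ t + φ t * ψ t with hddef
  have hftc : ∫ t in Ioc (x i) b, d t = φ b * φ b - φ (x i) * φ (x i) := by
    rw [← intervalIntegral.integral_of_le hxb]
    exact intervalIntegral.integral_eq_sub_of_hasDerivAt
      (f := fun t => φ t * φ t) (fun t _ => (hφd t).mul (hφd t))
      (((hψc.mul hφc).add (hφc.mul hψc)).intervalIntegrable _ _)
  have hφx : φ (x i) = f x := by simp [hφdef]
  have hdc : Continuous d := (hψc.mul hφc).add (hφc.mul hψc)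
  have key : f x ^ 2 ≤ ∫ t in Ioc (x i) b, |d t| := by
    have h1 : f x ^ 2 = -(∫ t in Ioc (x i) b, d t) := by rw [hftc, hφb, hφx]; ring
    calc f x ^ 2 = -(∫ t in Ioc (x i) b, d t) := h1
      _ ≤ |∫ t in Ioc (x i) b, d t| := neg_le_abs _
      _ ≤ ∫ t in Ioc (x i) b, |d t| := by
          simpa using norm_integral_le_integral_norm (μ := volume.restrict (Ioc (x i) b)) d
  have hint : IntegrableOn (fun t => |d t|) (Ioc (x i) b) := hdc.abs.integrableOn_Ioc
  have h3 : ENNReal.ofReal (f x ^ 2) ≤ ∫⁻ t in Ioc (x i) b, ENNReal.ofReal |d t| := by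
    calc ENNReal.ofReal (f x ^ 2) ≤ ENNReal.ofReal (∫ t in Ioc (x i) b, |d t|) :=
          ENNReal.ofReal_le_ofReal key
      _ = ∫⁻ t in Ioc (x i) b, ENNReal.ofReal |d t| :=
          ofReal_integral_eq_lintegral_ofReal hint
            (Filter.Eventually.of_forall fun t => abs_nonneg _)
  have h4 : ∀ t, ENNReal.ofReal |d t| ≤ 2 * (ENNReal.ofReal |φ t| * ENNReal.ofReal |ψ t|) := by
    intro t
    have habs : |d t| ≤ 2 * (|φ t| * |ψ t|) := by
      rw [hddef]
      calc |ψ t * φ t + φ t * ψ t| ≤ |ψ t * φ t| + |φ t * ψ t| := abs_add_le _ _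
        _ = 2 * (|φ t| * |ψ t|) := by rw [abs_mul, abs_mul]; ring
    calc ENNReal.ofReal |d t| ≤ ENNReal.ofReal (2 * (|φ t| * |ψ t|)) :=
        ENNReal.ofReal_le_ofReal habs
      _ = 2 * (ENNReal.ofReal |φ t| * ENNReal.ofReal |ψ t|) := by
        rw [ENNReal.ofReal_mul (by norm_num), ENNReal.ofReal_mul (abs_nonneg _)]
        norm_num
  calc ENNReal.ofReal (f x ^ 2)
      ≤ ∫⁻ t in Ioc (x i) b, ENNReal.ofReal |d t| := h3
    _ ≤ ∫⁻ t in Ioc (x i) b, 2 * (ENNReal.ofReal |φ t| * ENNReal.ofReal |ψ t|) :=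
        lintegral_mono fun t => h4 t
    _ ≤ ∫⁻ t in Ici (x i), 2 * (ENNReal.ofReal |φ t| * ENNReal.ofReal |ψ t|) :=
        lintegral_mono_set (fun t ht => le_of_lt ht.1)
    _ = 2 * ∫⁻ t in Ici (x i), ENNReal.ofReal |φ t| * ENNReal.ofReal |ψ t| := by
        rw [lintegral_const_mul]
        exact (hφc.measurable.abs.ennreal_ofReal).mul (hψc.measurable.abs.ennreal_ofReal)

def S3 : Fin 3 → Set ℝ := fun i => if i = 2 then Ioi (0:ℝ) else univ

noncomputable def nu (i : Fin 3) : Measure ℝ := volume.restrict (S3 i)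

instance (i : Fin 3) : SigmaFinite (nu i) := by unfold nu; infer_instance

lemma pi_nu : Measure.pi nu = (volume : Measure (Fin 3 → ℝ)).restrict H3 := by
  refine Measure.pi_eq fun s hs => ?_
  have hmeas : MeasurableSet (univ.pi s) := MeasurableSet.univ_pi hs
  rw [Measure.restrict_apply hmeas]
  have hset : univ.pi s ∩ H3 = univ.pi (fun i => s i ∩ S3 i) := by
    ext x
    simp only [mem_inter_iff, mem_pi, mem_univ, true_implies, H3, mem_setOf_eq, S3]
    constructor
    · rintro ⟨h1, h2⟩ i
      rcases eq_or_ne i 2 with rfl | hi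
      · simpa using ⟨h1 2, h2⟩
      · simp [hi, h1 i]
    · intro hx
      refine ⟨fun i => (hx i).1, ?_⟩
      have := (hx 2).2
      simpa using this
  rw [hset, volume_pi, Measure.pi_pi]
  congr 1
  funext i
  rw [nu, Measure.restrict_apply (hs i)]

lemma lintegral_H3 {F : (Fin 3 → ℝ) → ENNReal} (hF : Measurable F) :
    ∫⁻ x in H3, F x = ∫⁻ z, (∫⁻ y, (∫⁻ t, F ![t, y, z] ∂nu 0) ∂nu 1) ∂nu 2 := by
  rw [← pi_nu, lintegral_eq_lmarginal_univ (fun _ : Fin 3 => (0:ℝ))]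
  have huniv : (Finset.univ : Finset (Fin 3)) = insert 2 (insert 1 {0}) := by decide
  rw [huniv, lmarginal_insert _ hF (by decide)]
  refine lintegral_congr fun z => ?_
  rw [lmarginal_insert _ hF (by decide)]
  refine lintegral_congr fun y => ?_
  rw [lmarginal_singleton]
  refine lintegral_congr fun t => ?_
  congr 1
  funext j
  fin_cases j <;> simp [Function.update_apply]

lemma upd0 (t y z s : ℝ) : Function.update ![t, y, z] 0 s = ![s, y, z] := by
  funext j; fin_cases j <;> simp [Function.update_apply]

lemma upd1 (t y z s : ℝ) : Function.update ![t, y, z] 1 s = ![t, s, z] := by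
  funext j; fin_cases j <;> simp [Function.update_apply]

lemma upd2 (t y z s : ℝ) : Function.update ![t, y, z] 2 s = ![t, y, s] := by
  funext j; fin_cases j <;> simp [Function.update_apply]

/-- Directional pointwise bound. -/
lemma dir_bound {f : (Fin 3 → ℝ) → ℝ} (hf : ContDiff ℝ (⊤ : ℕ∞) f) (hsupp : HasCompactSupport f)
    (i : Fin 3) (x : Fin 3 → ℝ) (hsub : Ici (x i) ⊆ S3 i) :
    ENNReal.ofReal |f x| ≤
      (2 * ∫⁻ s, ENNReal.ofReal |f (Function.update x i s)| *
        ENNReal.ofReal |pd i f (Function.update x i s)| ∂nu i) ^ ((1:ℝ)/2) := by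
  have h2 : (ENNReal.ofReal (f x ^ 2)) ^ ((1:ℝ)/2) = ENNReal.ofReal |f x| := by
    rw [ENNReal.ofReal_rpow_of_nonneg (by positivity) (by norm_num)]
    congr 1
    rw [← Real.sqrt_eq_rpow, Real.sqrt_sq_eq_abs]
  rw [← h2]
  refine ENNReal.rpow_le_rpow ?_ (by norm_num)
  refine le_trans (pointwise_sq_le hf hsupp i x) (mul_le_mul_right ?_ _)
  exact lintegral_mono_set hsub

lemma sq_int {u : (Fin 3 → ℝ) → ℝ} (hu : Continuous u) (hsu : HasCompactSupport u) :
    ∫⁻ x in H3, ENNReal.ofReal |u x| ^ (2:ℝ) = ENNReal.ofReal (∫ x in H3, u x ^ 2) := by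
  have hpt : ∀ x, ENNReal.ofReal |u x| ^ (2:ℝ) = ENNReal.ofReal (u x ^ 2) := by
    intro x
    rw [ENNReal.ofReal_rpow_of_nonneg (abs_nonneg _) (by norm_num)]
    congr 1
    rw [show ((2:ℝ)) = ((2:ℕ):ℝ) by norm_num, Real.rpow_natCast]
    exact sq_abs _
  simp_rw [hpt]
  have hint : Integrable (fun x => u x ^ 2) (volume.restrict H3) := by
    have hc : Continuous fun x => u x ^ 2 := hu.pow 2
    have hcs : HasCompactSupport fun x => u x ^ 2 :=
      hsu.comp_left (g := fun r : ℝ => r ^ 2) (by norm_num)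
    exact (hc.integrable_of_hasCompactSupport hcs).restrict
  rw [ofReal_integral_eq_lintegral_ofReal hint
    (Filter.Eventually.of_forall fun x => sq_nonneg _)]

lemma l2_bound {f : (Fin 3 → ℝ) → ℝ} (hf : ContDiff ℝ (⊤ : ℕ∞) f) (hs : HasCompactSupport f)
    (i : Fin 3) :
    ∫⁻ x in H3, ENNReal.ofReal |f x| * ENNReal.ofReal |pd i f x| ≤
      ENNReal.ofReal (L2 f * L2 (pd i f)) := by
  have hP : Measurable fun x : Fin 3 → ℝ => ENNReal.ofReal |f x| ^ (2:ℝ) :=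
    (hf.continuous.measurable.abs.ennreal_ofReal).pow_const _
  have hQ : Measurable fun x : Fin 3 → ℝ => ENNReal.ofReal |pd i f x| ^ (2:ℝ) :=
    ((pd_cont hf i).measurable.abs.ennreal_ofReal).pow_const _
  have e : ∀ r : ℝ, (ENNReal.ofReal |r| ^ (2:ℝ)) ^ ((1:ℝ)/2) = ENNReal.ofReal |r| := by
    intro r; rw [← ENNReal.rpow_mul]; norm_num
  have step := cs (volume.restrict H3) hP.aemeasurable hQ.aemeasurable
  simp_rw [e] at step
  rw [sq_int hf.continuous hs, sq_int (pd_cont hf i) (pd_compact_support hs i)] at step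
  refine le_trans step (le_of_eq ?_)
  rw [ENNReal.ofReal_rpow_of_nonneg (integral_nonneg fun x => sq_nonneg _) (by norm_num),
    ENNReal.ofReal_rpow_of_nonneg (integral_nonneg fun x => sq_nonneg _) (by norm_num),
    ← ENNReal.ofReal_mul (by positivity)]
  congr 1
  rw [L2, L2, Real.sqrt_eq_rpow, Real.sqrt_eq_rpow]

lemma marg1 {F : (Fin 3 → ℝ) → ENNReal} (hF : Measurable F) :
    ∫⁻ z, (∫⁻ t, (∫⁻ s, F ![t, s, z] ∂nu 1) ∂nu 0) ∂nu 2 = ∫⁻ x in H3, F x := by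
  rw [lintegral_H3 hF]
  refine lintegral_congr fun z => ?_
  have hm : Measurable fun p : ℝ × ℝ => F ![p.1, p.2, z] := by
    refine hF.comp ?_
    refine measurable_pi_lambda _ fun j => ?_
    fin_cases j <;> simp <;>
      first | exact measurable_fst | exact measurable_snd | exact measurable_const
  exact lintegral_lintegral_swap hm.aemeasurable

lemma marg2 {F : (Fin 3 → ℝ) → ENNReal} (hF : Measurable F) :
    ∫⁻ y, (∫⁻ t, (∫⁻ s, F ![t, y, s] ∂nu 2) ∂nu 0) ∂nu 1 = ∫⁻ x in H3, F x := by
  rw [lintegral_H3 hF]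
  have h1 : ∀ y, (∫⁻ t, (∫⁻ s, F ![t, y, s] ∂nu 2) ∂nu 0)
      = ∫⁻ s, (∫⁻ t, F ![t, y, s] ∂nu 0) ∂nu 2 := by
    intro y
    have hm : Measurable fun p : ℝ × ℝ => F ![p.1, y, p.2] := by
      refine hF.comp ?_
      refine measurable_pi_lambda _ fun j => ?_
      fin_cases j <;> simp <;>
        first | exact measurable_fst | exact measurable_snd | exact measurable_const
    exact lintegral_lintegral_swap hm.aemeasurable
  simp_rw [h1]
  have hm2 : Measurable (Function.uncurry fun y s => ∫⁻ t, F ![t, y, s] ∂nu 0) := by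
    apply Measurable.lintegral_prod_right (f := fun (p : ℝ × ℝ) t => F ![t, p.1, p.2])
    refine hF.comp ?_
    refine measurable_pi_lambda _ fun j => ?_
    fin_cases j <;> simp <;>
      first | exact measurable_snd | exact measurable_fst.fst | exact measurable_fst.snd
  exact lintegral_lintegral_swap hm2.aemeasurable

lemma combine {X : ENNReal} {r : ℝ} (hr : 0 ≤ r) (hX : X ≤ ENNReal.ofReal r) :
    (2 * X) ^ ((1:ℝ)/2) ≤ 2 * ENNReal.ofReal (r ^ ((1:ℝ)/2)) := by
  calc (2 * X) ^ ((1:ℝ)/2) ≤ (2 * ENNReal.ofReal r) ^ ((1:ℝ)/2) :=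
        ENNReal.rpow_le_rpow (mul_le_mul_right hX _) (by norm_num)
    _ = (2:ENNReal) ^ ((1:ℝ)/2) * (ENNReal.ofReal r) ^ ((1:ℝ)/2) :=
        ENNReal.mul_rpow_of_nonneg _ _ (by norm_num)
    _ ≤ (2:ENNReal) ^ (1:ℝ) * (ENNReal.ofReal r) ^ ((1:ℝ)/2) :=
        mul_le_mul_left (ENNReal.rpow_le_rpow_of_exponent_le one_le_two (by norm_num)) _
    _ = 2 * ENNReal.ofReal (r ^ ((1:ℝ)/2)) := by
        rw [ENNReal.rpow_one, ENNReal.ofReal_rpow_of_nonneg hr (by norm_num)]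

end AnisoAux

open AnisoAux

/-- Anisotropic trilinear Sobolev inequality on the half-space. -/
theorem anisotropic_trilinear :
    ∃ C : ℝ, 0 < C ∧ ∀ f g h : (Fin 3 → ℝ) → ℝ,
      ContDiff ℝ (⊤ : ℕ∞) f → HasCompactSupport f →
      ContDiff ℝ (⊤ : ℕ∞) g → HasCompactSupport g →
      ContDiff ℝ (⊤ : ℕ∞) h → HasCompactSupport h →
      (∫ x in H3, |f x * g x * h x|) ≤
        C * L2 f ^ ((1:ℝ)/2) * L2 (pd 0 f) ^ ((1:ℝ)/2)
          * L2 g ^ ((1:ℝ)/2) * L2 (pd 1 g) ^ ((1:ℝ)/2)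
          * L2 h ^ ((1:ℝ)/2) * L2 (pd 2 h) ^ ((1:ℝ)/2) := by
  refine ⟨8, by norm_num, fun f g h hf hfs hg hgs hh hhs => ?_⟩
  have hfc := hf.continuous
  have hgc := hg.continuous
  have hhc := hh.continuous
  set Ff : (Fin 3 → ℝ) → ENNReal :=
    fun x => ENNReal.ofReal |f x| * ENNReal.ofReal |pd 0 f x| with hFf
  set Fg : (Fin 3 → ℝ) → ENNReal :=
    fun x => ENNReal.ofReal |g x| * ENNReal.ofReal |pd 1 g x| with hFg
  set Fh : (Fin 3 → ℝ) → ENNReal :=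
    fun x => ENNReal.ofReal |h x| * ENNReal.ofReal |pd 2 h x| with hFh
  have mFf : Measurable Ff :=
    (hfc.measurable.abs.ennreal_ofReal).mul ((pd_cont hf 0).measurable.abs.ennreal_ofReal)
  have mFg : Measurable Fg :=
    (hgc.measurable.abs.ennreal_ofReal).mul ((pd_cont hg 1).measurable.abs.ennreal_ofReal)
  have mFh : Measurable Fh :=
    (hhc.measurable.abs.ennreal_ofReal).mul ((pd_cont hh 2).measurable.abs.ennreal_ofReal)
  set a : ℝ → ℝ → ENNReal := fun y z => 2 * ∫⁻ s, Ff ![s, y, z] ∂nu 0 with ha_def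
  set b : ℝ → ℝ → ENNReal := fun t z => 2 * ∫⁻ s, Fg ![t, s, z] ∂nu 1 with hb_def
  set c : ℝ → ℝ → ENNReal := fun t y => 2 * ∫⁻ s, Fh ![t, y, s] ∂nu 2 with hc_def
  have ha : Measurable (Function.uncurry a) := by
    refine Measurable.const_mul ?_ 2
    apply Measurable.lintegral_prod_right (f := fun (p : ℝ × ℝ) s => Ff ![s, p.1, p.2])
    refine mFf.comp ?_
    refine measurable_pi_lambda _ fun j => ?_
    fin_cases j <;> simp <;>
      first | exact measurable_snd | exact measurable_fst.fst | exact measurable_fst.snd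
  have hb : Measurable (Function.uncurry b) := by
    refine Measurable.const_mul ?_ 2
    apply Measurable.lintegral_prod_right (f := fun (p : ℝ × ℝ) s => Fg ![p.1, s, p.2])
    refine mFg.comp ?_
    refine measurable_pi_lambda _ fun j => ?_
    fin_cases j <;> simp <;>
      first | exact measurable_snd | exact measurable_fst.fst | exact measurable_fst.snd
  have hc : Measurable (Function.uncurry c) := by
    refine Measurable.const_mul ?_ 2
    apply Measurable.lintegral_prod_right (f := fun (p : ℝ × ℝ) s => Fh ![p.1, p.2, s])
    refine mFh.comp ?_
    refine measurable_pi_lambda _ fun j => ?_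
    fin_cases j <;> simp <;>
      first | exact measurable_snd | exact measurable_fst.fst | exact measurable_fst.snd
  have habs_meas : Measurable fun x : Fin 3 → ℝ => ENNReal.ofReal |f x * g x * h x| :=
    (((hfc.mul hgc).mul hhc).abs).measurable.ennreal_ofReal
  have hS2 : S3 2 = Set.Ioi (0:ℝ) := by simp [S3]
  -- the main pointwise + Loomis-Whitney step
  have main : (∫⁻ x in H3, ENNReal.ofReal |f x * g x * h x|) ≤
      (2 * ∫⁻ x in H3, Ff x) ^ ((1:ℝ)/2) * ((2 * ∫⁻ x in H3, Fg x) ^ ((1:ℝ)/2) *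
        (2 * ∫⁻ x in H3, Fh x) ^ ((1:ℝ)/2)) := by
    rw [lintegral_H3 habs_meas]
    have hae : ∀ᵐ z ∂nu 2, z ∈ Set.Ioi (0:ℝ) := by
      rw [nu, hS2]; exact ae_restrict_mem measurableSet_Ioi
    have step1 : ∫⁻ z, (∫⁻ y, (∫⁻ t,
          ENNReal.ofReal |f ![t, y, z] * g ![t, y, z] * h ![t, y, z]| ∂nu 0) ∂nu 1) ∂nu 2 ≤
        ∫⁻ z, (∫⁻ y, (∫⁻ t,
          (a y z) ^ ((1:ℝ)/2) * ((b t z) ^ ((1:ℝ)/2) * (c t y) ^ ((1:ℝ)/2)) ∂nu 0) ∂nu 1) ∂nu 2 := by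
      refine lintegral_mono_ae (hae.mono fun z hz => ?_)
      refine lintegral_mono fun y => lintegral_mono fun t => ?_
      set x : Fin 3 → ℝ := ![t, y, z] with hx
      have hx2 : x 2 = z := rfl
      have e0 : a y z = 2 * ∫⁻ s, ENNReal.ofReal |f (Function.update x 0 s)| *
          ENNReal.ofReal |pd 0 f (Function.update x 0 s)| ∂nu 0 := by
        simp only [ha_def]
        congr 1
        refine lintegral_congr fun s => ?_
        rw [hx, upd0, hFf]
      have e1 : b t z = 2 * ∫⁻ s, ENNReal.ofReal |g (Function.update x 1 s)| *
          ENNReal.ofReal |pd 1 g (Function.update x 1 s)| ∂nu 1 := by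
        simp only [hb_def]
        congr 1
        refine lintegral_congr fun s => ?_
        rw [hx, upd1, hFg]
      have e2 : c t y = 2 * ∫⁻ s, ENNReal.ofReal |h (Function.update x 2 s)| *
          ENNReal.ofReal |pd 2 h (Function.update x 2 s)| ∂nu 2 := by
        simp only [hc_def]
        congr 1
        refine lintegral_congr fun s => ?_
        rw [hx, upd2, hFh]
      have df : ENNReal.ofReal |f x| ≤ (a y z) ^ ((1:ℝ)/2) := by
        rw [e0]
        exact dir_bound hf hfs 0 x (by simp [S3])
      have dg : ENNReal.ofReal |g x| ≤ (b t z) ^ ((1:ℝ)/2) := by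
        rw [e1]
        exact dir_bound hg hgs 1 x (by simp [S3])
      have dh : ENNReal.ofReal |h x| ≤ (c t y) ^ ((1:ℝ)/2) := by
        rw [e2]
        refine dir_bound hh hhs 2 x ?_
        rw [hx2, hS2]
        exact fun w hw => mem_Ioi.mpr (lt_of_lt_of_le hz hw)
      calc ENNReal.ofReal |f x * g x * h x|
          = ENNReal.ofReal |f x| * (ENNReal.ofReal |g x| * ENNReal.ofReal |h x|) := by
            rw [abs_mul, abs_mul, ENNReal.ofReal_mul (by positivity),
              ENNReal.ofReal_mul (abs_nonneg _), mul_assoc]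
        _ ≤ (a y z) ^ ((1:ℝ)/2) * ((b t z) ^ ((1:ℝ)/2) * (c t y) ^ ((1:ℝ)/2)) :=
            mul_le_mul' df (mul_le_mul' dg dh)
    refine le_trans step1 ?_
    refine le_trans (lw3 (nu 0) (nu 1) (nu 2) ha hb hc) (le_of_eq ?_)
    have ea : (∫⁻ z, (∫⁻ y, a y z ∂nu 1) ∂nu 2) = 2 * ∫⁻ x in H3, Ff x := by
      have hmi : ∀ z, Measurable fun y => ∫⁻ s, Ff ![s, y, z] ∂nu 0 := by
        intro z
        apply Measurable.lintegral_prod_right (f := fun (y : ℝ) s => Ff ![s, y, z])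
        refine mFf.comp ?_
        refine measurable_pi_lambda _ fun j => ?_
        fin_cases j <;> simp <;>
          first | exact measurable_snd | exact measurable_fst | exact measurable_const
      have h1 : ∀ z, ∫⁻ y, a y z ∂nu 1 = 2 * ∫⁻ y, (∫⁻ s, Ff ![s, y, z] ∂nu 0) ∂nu 1 := by
        intro z
        simp only [ha_def]
        rw [lintegral_const_mul _ (hmi z)]
      simp_rw [h1]
      rw [lintegral_const_mul]
      · congr 1
        exact (lintegral_H3 mFf).symm
      · apply Measurable.lintegral_prod_right
          (f := fun (z : ℝ) y => ∫⁻ s, Ff ![s, y, z] ∂nu 0)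
        apply Measurable.lintegral_prod_right (f := fun (p : ℝ × ℝ) s => Ff ![s, p.2, p.1])
        refine mFf.comp ?_
        refine measurable_pi_lambda _ fun j => ?_
        fin_cases j <;> simp <;>
          first | exact measurable_snd | exact measurable_fst.snd | exact measurable_fst.fst
    have eb : (∫⁻ z, (∫⁻ t, b t z ∂nu 0) ∂nu 2) = 2 * ∫⁻ x in H3, Fg x := by
      have hmi : ∀ z, Measurable fun t => ∫⁻ s, Fg ![t, s, z] ∂nu 1 := by
        intro z
        apply Measurable.lintegral_prod_right (f := fun (t : ℝ) s => Fg ![t, s, z])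
        refine mFg.comp ?_
        refine measurable_pi_lambda _ fun j => ?_
        fin_cases j <;> simp <;>
          first | exact measurable_snd | exact measurable_fst | exact measurable_const
      have h1 : ∀ z, ∫⁻ t, b t z ∂nu 0 = 2 * ∫⁻ t, (∫⁻ s, Fg ![t, s, z] ∂nu 1) ∂nu 0 := by
        intro z
        simp only [hb_def]
        rw [lintegral_const_mul _ (hmi z)]
      simp_rw [h1]
      rw [lintegral_const_mul]
      · congr 1
        exact marg1 mFg
      · apply Measurable.lintegral_prod_right
          (f := fun (z : ℝ) t => ∫⁻ s, Fg ![t, s, z] ∂nu 1)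
        apply Measurable.lintegral_prod_right (f := fun (p : ℝ × ℝ) s => Fg ![p.2, s, p.1])
        refine mFg.comp ?_
        refine measurable_pi_lambda _ fun j => ?_
        fin_cases j <;> simp <;>
          first | exact measurable_snd | exact measurable_fst.snd | exact measurable_fst.fst
    have ec : (∫⁻ y, (∫⁻ t, c t y ∂nu 0) ∂nu 1) = 2 * ∫⁻ x in H3, Fh x := by
      have hmi : ∀ y, Measurable fun t => ∫⁻ s, Fh ![t, y, s] ∂nu 2 := by
        intro y
        apply Measurable.lintegral_prod_right (f := fun (t : ℝ) s => Fh ![t, y, s])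
        refine mFh.comp ?_
        refine measurable_pi_lambda _ fun j => ?_
        fin_cases j <;> simp <;>
          first | exact measurable_snd | exact measurable_fst | exact measurable_const
      have h1 : ∀ y, ∫⁻ t, c t y ∂nu 0 = 2 * ∫⁻ t, (∫⁻ s, Fh ![t, y, s] ∂nu 2) ∂nu 0 := by
        intro y
        simp only [hc_def]
        rw [lintegral_const_mul _ (hmi y)]
      simp_rw [h1]
      rw [lintegral_const_mul]
      · congr 1
        exact marg2 mFh
      · apply Measurable.lintegral_prod_right
          (f := fun (y : ℝ) t => ∫⁻ s, Fh ![t, y, s] ∂nu 2)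
        apply Measurable.lintegral_prod_right (f := fun (p : ℝ × ℝ) s => Fh ![p.2, p.1, s])
        refine mFh.comp ?_
        refine measurable_pi_lambda _ fun j => ?_
        fin_cases j <;> simp <;>
          first | exact measurable_snd | exact measurable_fst.snd | exact measurable_fst.fst
    rw [ea, eb, ec]
  -- combine with Cauchy-Schwarz L2 bounds
  have hαf : (0:ℝ) ≤ L2 f * L2 (pd 0 f) :=
    mul_nonneg (Real.sqrt_nonneg _) (Real.sqrt_nonneg _)
  have hαg : (0:ℝ) ≤ L2 g * L2 (pd 1 g) :=
    mul_nonneg (Real.sqrt_nonneg _) (Real.sqrt_nonneg _)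
  have hαh : (0:ℝ) ≤ L2 h * L2 (pd 2 h) :=
    mul_nonneg (Real.sqrt_nonneg _) (Real.sqrt_nonneg _)
  set αf : ℝ := (L2 f * L2 (pd 0 f)) ^ ((1:ℝ)/2) with hαf_def
  set αg : ℝ := (L2 g * L2 (pd 1 g)) ^ ((1:ℝ)/2) with hαg_def
  set αh : ℝ := (L2 h * L2 (pd 2 h)) ^ ((1:ℝ)/2) with hαh_def
  have hαf0 : 0 ≤ αf := Real.rpow_nonneg hαf _
  have hαg0 : 0 ≤ αg := Real.rpow_nonneg hαg _
  have hαh0 : 0 ≤ αh := Real.rpow_nonneg hαh _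
  have cf := combine hαf (l2_bound hf hfs 0)
  have cg := combine hαg (l2_bound hg hgs 1)
  have ch := combine hαh (l2_bound hh hhs 2)
  have final_enn : (∫⁻ x in H3, ENNReal.ofReal |f x * g x * h x|) ≤
      ENNReal.ofReal (8 * (αf * (αg * αh))) := by
    refine le_trans main ?_
    calc (2 * ∫⁻ x in H3, Ff x) ^ ((1:ℝ)/2) * ((2 * ∫⁻ x in H3, Fg x) ^ ((1:ℝ)/2) *
          (2 * ∫⁻ x in H3, Fh x) ^ ((1:ℝ)/2))
        ≤ (2 * ENNReal.ofReal αf) * ((2 * ENNReal.ofReal αg) * (2 * ENNReal.ofReal αh)) :=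
          mul_le_mul' cf (mul_le_mul' cg ch)
      _ = ENNReal.ofReal (8 * (αf * (αg * αh))) := by
          rw [ENNReal.ofReal_mul (by norm_num), ENNReal.ofReal_mul hαf0,
            ENNReal.ofReal_mul hαg0]
          have h8 : ENNReal.ofReal (8:ℝ) = 8 := by norm_num
          rw [h8]
          ring
  have hRHS0 : (0:ℝ) ≤ 8 * (αf * (αg * αh)) := by positivity
  calc (∫ x in H3, |f x * g x * h x|)
      = (∫⁻ x in H3, ENNReal.ofReal |f x * g x * h x|).toReal := by
        rw [integral_eq_lintegral_of_nonneg_ae (f := fun x => |f x * g x * h x|)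
          (Filter.Eventually.of_forall fun x => abs_nonneg _)
          ((((hfc.mul hgc).mul hhc).abs).aestronglyMeasurable)]
    _ ≤ (ENNReal.ofReal (8 * (αf * (αg * αh)))).toReal :=
        ENNReal.toReal_mono ENNReal.ofReal_ne_top final_enn
    _ = 8 * (αf * (αg * αh)) := ENNReal.toReal_ofReal hRHS0
    _ = 8 * L2 f ^ ((1:ℝ)/2) * L2 (pd 0 f) ^ ((1:ℝ)/2)
          * L2 g ^ ((1:ℝ)/2) * L2 (pd 1 g) ^ ((1:ℝ)/2)
          * L2 h ^ ((1:ℝ)/2) * L2 (pd 2 h) ^ ((1:ℝ)/2) := by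
        have hn : ∀ u : (Fin 3 → ℝ) → ℝ, 0 ≤ L2 u := by
          intro u; rw [L2]; exact Real.sqrt_nonneg _
        rw [hαf_def, hαg_def, hαh_def, Real.mul_rpow (hn _) (hn _),
          Real.mul_rpow (hn _) (hn _), Real.mul_rpow (hn _) (hn _)]
        ring
end
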